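/- arXiv:1902.03086 — 2 statements merged into one kernel-verified Lean document; each statement's English description precedes it below -/
import Mathlib

section
/- Let S be positive semidefinite, λ > 0, and Ŝ symmetric with ‖(S+λI)^{-1/2}(Ŝ−S)(S+λI)^{-1/2}‖ ≤ 1/2. Then (2/3)·I ⪯ (S+λI)^{1/2}(Ŝ+λI)^{-1}(S+λI)^{1/2} ⪯ 2·I. -/
/-!
Write `A = S + λI` and `B = A^{1/2}` (`msqrt` agrees with Mathlib's `CFC.sqrt`), and put
`E = B⁻¹(Ŝ - S)B⁻¹`. Then `Ŝ + λI = B(1 + E)B`, so the sandwiched matrix is `(1 + E)⁻¹`.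
The spectrum of the self-adjoint `E` lies in `[-1/2, 1/2]`, hence `(1 + E)⁻¹ = f(E)`, with
`f x = (1 + x)⁻¹`, has spectrum in `[2/3, 2]`.
-/

open Matrix
open scoped Matrix.Norms.L2Operator

/-- The positive semidefinite square root of a matrix (junk value `0` if the
matrix is not positive semidefinite). -/
noncomputable def msqrt {d : ℕ} (M : Matrix (Fin d) (Fin d) ℝ) :
    Matrix (Fin d) (Fin d) ℝ := by
  classical exact if h : M.PosSemidef then
    (h.1.eigenvectorUnitary : Matrix (Fin d) (Fin d) ℝ) *
      diagonal (fun i => Real.sqrt (h.1.eigenvalues i)) *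
      (star h.1.eigenvectorUnitary : Matrix (Fin d) (Fin d) ℝ) else 0

/-- The inverse square root `M^{-1/2}` of a positive semidefinite matrix. -/
noncomputable def minvSqrt {d : ℕ} (M : Matrix (Fin d) (Fin d) ℝ) :
    Matrix (Fin d) (Fin d) ℝ :=
  (msqrt M)⁻¹

/-- Loewner order: `A ⪯ B` iff `B - A` is positive semidefinite. -/
def Loewner {d : ℕ} (A B : Matrix (Fin d) (Fin d) ℝ) : Prop :=
  (B - A).PosSemidef

open scoped MatrixOrder

theorem CStarRing.norm_le_norm_of_mem_spectrum {𝕜 A : Type*} [NormedField 𝕜] [NormedRing A]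
    [StarRing A] [CStarRing A] [NormedAlgebra 𝕜 A] [CompleteSpace A] {a : A} {x : 𝕜}
    (hx : x ∈ spectrum 𝕜 a) : ‖x‖ ≤ ‖a‖ := by
  cases subsingleton_or_nontrivial A with
  | inl _ => simp [spectrum.of_subsingleton] at hx
  | inr _ => exact spectrum.norm_le_norm_of_mem hx

theorem IsSelfAdjoint.ringInverse_one_add_mem_Icc {A : Type*} [TopologicalSpace A] [Ring A]
    [StarRing A] [PartialOrder A] [StarOrderedRing A] [Algebra ℝ A]
    [ContinuousFunctionalCalculus ℝ A IsSelfAdjoint] {a : A} (ha : IsSelfAdjoint a) {ε : ℝ}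
    (hε : ε < 1) (hspec : ∀ x ∈ spectrum ℝ a, |x| ≤ ε) :
    Ring.inverse (1 + a) ∈ Set.Icc (algebraMap ℝ A (1 + ε)⁻¹) (algebraMap ℝ A (1 - ε)⁻¹) := by
  have hpos : ∀ x ∈ spectrum ℝ a, 0 < 1 + x := fun x hx => by
    linarith [neg_abs_le x, hspec x hx]
  have hcont : ContinuousOn (fun x : ℝ => (1 + x)⁻¹) (spectrum ℝ a) :=
    (continuousOn_const.add continuousOn_id).inv₀ fun x hx => (hpos x hx).ne'
  have hinv : Ring.inverse (1 + a) = cfc (fun x : ℝ => (1 + x)⁻¹) a := by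
    rw [cfc_inv (fun x : ℝ => 1 + x) a fun x hx => (hpos x hx).ne',
      cfc_const_add (1 : ℝ) (fun x : ℝ => x) a, cfc_id' ℝ a, map_one]
  rw [hinv]
  refine ⟨algebraMap_le_cfc _ _ a (fun x hx => ?_) hcont,
    cfc_le_algebraMap _ _ a (fun x hx => ?_) hcont⟩
  all_goals
    obtain ⟨hlo, hhi⟩ := abs_le.mp (hspec x hx)
    gcongr
  · linarith [hpos x hx]
  · linarith

theorem Matrix.mul_mul_self_add_inv_mul {n α : Type*} [Fintype n] [DecidableEq n] [CommRing α]
    {B : Matrix n n α} (hB : IsUnit B) (D : Matrix n n α) :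
    B * (B * B + D)⁻¹ * B = (1 + B⁻¹ * D * B⁻¹)⁻¹ := by
  have hdet := (isUnit_iff_isUnit_det B).mp hB
  have hsplit : B * B + D = B * (1 + B⁻¹ * D * B⁻¹) * B := by
    simp [Matrix.mul_add, Matrix.add_mul, Matrix.mul_assoc, nonsing_inv_mul _ hdet,
      mul_nonsing_inv_cancel_left _ _ hdet]
  rw [hsplit, Matrix.mul_inv_rev, Matrix.mul_inv_rev]
  simp [Matrix.mul_assoc, nonsing_inv_mul _ hdet, mul_nonsing_inv_cancel_left _ _ hdet]

theorem msqrt_eq_sqrt {d : ℕ} {M : Matrix (Fin d) (Fin d) ℝ} (hM : M.PosSemidef) :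
    msqrt M = CFC.sqrt M := by
  rw [msqrt, dif_pos hM, CFC.sqrt_eq_cfc, cfc_nnreal_eq_real _ M, hM.1.cfc_eq, IsHermitian.cfc]
  simp [Function.comp_def, max_eq_left (hM.eigenvalues_nonneg _)]

/-- If `‖(S+λI)^{-1/2}(Ŝ−S)(S+λI)^{-1/2}‖ ≤ 1/2`, then
`(2/3)·I ⪯ (S+λI)^{1/2}(Ŝ+λI)^{-1}(S+λI)^{1/2} ⪯ 2·I`. -/
theorem psd_sandwich_of_opNorm_le_half {d : ℕ}
    (S Shat : Matrix (Fin d) (Fin d) ℝ) (l : ℝ)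
    (hS : S.PosSemidef) (hShat : Shat.IsHermitian) (hl : 0 < l)
    (herr : ‖minvSqrt (S + l • 1) * (Shat - S) * minvSqrt (S + l • 1)‖ ≤ 1 / 2) :
    Loewner ((2 / 3 : ℝ) • (1 : Matrix (Fin d) (Fin d) ℝ))
        (msqrt (S + l • 1) * (Shat + l • 1)⁻¹ * msqrt (S + l • 1)) ∧
    Loewner (msqrt (S + l • 1) * (Shat + l • 1)⁻¹ * msqrt (S + l • 1))
        ((2 : ℝ) • (1 : Matrix (Fin d) (Fin d) ℝ)) := by
  have hA : (S + l • 1).PosDef := PosDef.posSemidef_add hS (PosDef.one.smul hl)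
  set B := msqrt (S + l • 1)
  have hB : B = CFC.sqrt (S + l • 1) := msqrt_eq_sqrt hA.posSemidef
  have hBunit : IsUnit B := hB ▸ hA.isStrictlyPositive.sqrt.isUnit
  have hBinv : B⁻¹.IsHermitian := by
    rw [hB]
    exact (CFC.sqrt_nonneg _).posSemidef.isHermitian.inv
  have hsum : Shat + l • 1 = B * B + (Shat - S) := by
    rw [hB, CFC.sqrt_mul_sqrt_self _ hA.posSemidef.nonneg]
    abel
  set E := B⁻¹ * (Shat - S) * B⁻¹
  have hE : IsSelfAdjoint E := by
    have := isHermitian_conjTranspose_mul_mul B⁻¹ (hShat.sub hS.isHermitian)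
    rwa [hBinv.eq] at this
  obtain ⟨hlo, hhi⟩ := hE.ringInverse_one_add_mem_Icc (ε := 1 / 2) (by norm_num)
    fun x hx => (CStarRing.norm_le_norm_of_mem_spectrum hx).trans herr
  rw [← nonsing_inv_eq_ringInverse, ← mul_mul_self_add_inv_mul hBunit, ← hsum] at hlo hhi
  norm_num [Algebra.algebraMap_eq_smul_one] at hlo hhi
  exact ⟨hlo, hhi⟩
end

section
/- Under the hypotheses that S ⪰ 0, λ > 0, and ‖(S+λI)^{-1/2}(Ŝ−S)(S+λI)^{-1/2}‖ ≤ 1/2, one has ‖(S+λI)^{1/2}(Ŝ+λI)^{-1/2}‖² ≤ 2 and ‖(S+λI)^{-1/2}(Ŝ+λI)^{1/2}‖² ≤ 3/2. -/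
open Matrix
open scoped Matrix.Norms.L2Operator

/-! Write `R = (S+λI)^{1/2}` and `E = R⁻¹(Ŝ−S)R⁻¹`, a symmetric matrix with `‖E‖ ≤ 1/2`. Then
`Ŝ+λI = R(1+E)R`, which is positive semidefinite because `1+E` is, so its square root `Q` satisfies
`Q² = R(1+E)R`. Hence `(RQ⁻¹)(RQ⁻¹)ᵀ = (1+E)⁻¹` and `(R⁻¹Q)(R⁻¹Q)ᵀ = 1+E`, and the C⋆-identity
`‖X‖² = ‖XXᵀ‖` turns the claims into the Neumann-series bound `‖(1+E)⁻¹‖ ≤ (1-‖E‖)⁻¹ ≤ 2` and the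
triangle inequality `‖1+E‖ ≤ 1 + ‖E‖ ≤ 3/2`. -/

lemma CStarRing.norm_one_le {E : Type*} [NormedRing E] [StarRing E] [CStarRing E] :
    ‖(1 : E)‖ ≤ 1 := by
  nontriviality E
  exact CStarRing.norm_one.le

section Conjugation

variable {n α : Type*} [Fintype n] [DecidableEq n] [CommRing α] {R Q M : Matrix n n α}

lemma mul_one_add_inv_mul_sub_mul_inv_mul (hR : IsUnit R.det) (B : Matrix n n α) :
    R * (1 + R⁻¹ * (B - R * R) * R⁻¹) * R = B := by
  simp [mul_add, add_mul, mul_assoc, mul_nonsing_inv_cancel_left _ _ hR,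
    nonsing_inv_mul_cancel_right _ _ hR]

variable [StarRing α]

lemma mul_inv_mul_conjTranspose_of_mul_self_eq (hR : R.IsHermitian) (hRu : IsUnit R.det)
    (hQ : Q.IsHermitian) (hQQ : Q * Q = R * M * R) : R * Q⁻¹ * (R * Q⁻¹)ᴴ = M⁻¹ := by
  rw [conjTranspose_mul, hR.eq, hQ.inv.eq]
  calc _ = R * (Q * Q)⁻¹ * R := by simp only [Matrix.mul_inv_rev, mul_assoc]
    _ = M⁻¹ := by
      simp [hQQ, Matrix.mul_inv_rev, mul_assoc, mul_nonsing_inv_cancel_left _ _ hRu,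
        nonsing_inv_mul_cancel_right _ _ hRu]

lemma inv_mul_mul_conjTranspose_of_mul_self_eq (hR : R.IsHermitian) (hRu : IsUnit R.det)
    (hQ : Q.IsHermitian) (hQQ : Q * Q = R * M * R) : R⁻¹ * Q * (R⁻¹ * Q)ᴴ = M := by
  rw [conjTranspose_mul, hR.inv.eq, hQ.eq]
  calc _ = R⁻¹ * (Q * Q) * R⁻¹ := by simp only [mul_assoc]
    _ = M := by
      simp [hQQ, mul_assoc, nonsing_inv_mul_cancel_left _ _ hRu, mul_nonsing_inv _ hRu]

end Conjugation

section L2OpNorm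

variable {n 𝕜 : Type*} [Fintype n] [DecidableEq n] [RCLike 𝕜]

lemma l2_opNorm_inv_one_add_le {E : Matrix n n 𝕜} (hE : ‖E‖ < 1) :
    ‖(1 + E)⁻¹‖ ≤ (1 - ‖E‖)⁻¹ := by
  rw [← norm_neg] at hE
  have hsum := tsum_geometric_le_of_norm_lt_one (-E) hE
  rw [geom_series_eq_inverse _ hE, ← nonsing_inv_eq_ringInverse, sub_neg_eq_add, norm_neg] at hsum
  linarith [CStarRing.norm_one_le (E := Matrix n n 𝕜)]

lemma posSemidef_one_add_of_l2_opNorm_le_one {E : Matrix n n ℝ} (hE : E.IsHermitian)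
    (h : ‖E‖ ≤ 1) : (1 + E).PosSemidef := by
  refine .of_dotProduct_mulVec_nonneg (isHermitian_one.add hE) fun x => ?_
  set v : EuclideanSpace ℝ n := WithLp.toLp 2 x
  have hEv : |inner ℝ v (toEuclideanCLM (𝕜 := ℝ) E v)| ≤ ‖v‖ ^ 2 :=
    calc _ ≤ ‖v‖ * ‖toEuclideanCLM (𝕜 := ℝ) E v‖ := abs_real_inner_le_norm _ _
      _ ≤ ‖v‖ * (‖E‖ * ‖v‖) := by gcongr; exact E.l2_opNorm_mulVec v
      _ = ‖E‖ * ‖v‖ ^ 2 := by ring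
      _ ≤ ‖v‖ ^ 2 := mul_le_of_le_one_left (by positivity) h
  have hq := inner_toEuclideanCLM (1 + E) v v
  simp only [map_add, map_one, _root_.add_apply, one_apply_eq_self,
    inner_add_right, real_inner_self_eq_norm_sq] at hq
  rw [star_trivial, show x = v.ofLp from rfl, ← hq]
  linarith [neg_abs_le (inner ℝ v (toEuclideanCLM (𝕜 := ℝ) E v))]

end L2OpNorm

section SquareRoot

variable {d : ℕ}

lemma isHermitian_msqrt (M : Matrix (Fin d) (Fin d) ℝ) : (msqrt M).IsHermitian := by
  unfold msqrt
  split_ifs with h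
  · exact isHermitian_mul_mul_conjTranspose _ (isHermitian_diagonal _)
  · exact isHermitian_zero

variable {M : Matrix (Fin d) (Fin d) ℝ}

lemma msqrt_mul_self (h : M.PosSemidef) : msqrt M * msqrt M = M := by
  rw [msqrt, dif_pos h]
  conv_rhs => rw [h.1.spectral_theorem, Unitary.conjStarAlgAut_apply]
  set U : Matrix (Fin d) (Fin d) ℝ := ↑h.1.eigenvectorUnitary
  have hUU : star U * U = 1 := Unitary.coe_star_mul_self _
  calc _ = U * (diagonal (fun i => √(h.1.eigenvalues i)) * (star U * U) *
        diagonal (fun i => √(h.1.eigenvalues i))) * star U := by simp only [mul_assoc]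
    _ = _ := by
      rw [hUU, mul_one, diagonal_mul_diagonal]
      congr 3 with i
      simp [Real.mul_self_sqrt (h.eigenvalues_nonneg i)]

lemma isUnit_det_msqrt (h : M.PosDef) : IsUnit (msqrt M).det := by
  refine isUnit_of_mul_isUnit_left (y := (msqrt M).det) ?_
  rw [← det_mul, msqrt_mul_self h.posSemidef]
  exact h.det_pos.ne'.isUnit

end SquareRoot

/-- Under `‖(S+λI)^{-1/2}(Ŝ−S)(S+λI)^{-1/2}‖ ≤ 1/2`, one has
`‖(S+λI)^{1/2}(Ŝ+λI)^{-1/2}‖² ≤ 2` and `‖(S+λI)^{-1/2}(Ŝ+λI)^{1/2}‖² ≤ 3/2`. -/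
theorem opNorm_sq_bounds_of_opNorm_le_half {d : ℕ}
    (S Shat : Matrix (Fin d) (Fin d) ℝ) (l : ℝ)
    (hS : S.PosSemidef) (hShat : Shat.IsHermitian) (hl : 0 < l)
    (herr : ‖minvSqrt (S + l • 1) * (Shat - S) * minvSqrt (S + l • 1)‖ ≤ 1 / 2) :
    ‖msqrt (S + l • 1) * minvSqrt (Shat + l • 1)‖ ^ 2 ≤ 2 ∧
    ‖minvSqrt (S + l • 1) * msqrt (Shat + l • 1)‖ ^ 2 ≤ 3 / 2 := by
  have hA : (S + l • 1).PosDef := PosDef.posSemidef_add hS (PosDef.one.smul hl)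
  set R := msqrt (S + l • 1)
  have hRH : R.IsHermitian := isHermitian_msqrt _
  have hRR : R * R = S + l • 1 := msqrt_mul_self hA.posSemidef
  have hRu : IsUnit R.det := isUnit_det_msqrt hA
  set E := R⁻¹ * (Shat - S) * R⁻¹
  have hE : ‖E‖ ≤ 1 / 2 := herr
  have hEH : E.IsHermitian := by
    have := isHermitian_conjTranspose_mul_mul R⁻¹ (hShat.sub hS.isHermitian)
    rwa [hRH.inv.eq] at this
  have hsplit : R * (1 + E) * R = Shat + l • 1 := by
    have := mul_one_add_inv_mul_sub_mul_inv_mul hRu (Shat + l • 1)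
    rwa [hRR, add_sub_add_right_eq_sub] at this
  have hB : (Shat + l • 1).PosSemidef := by
    have := (posSemidef_one_add_of_l2_opNorm_le_one hEH (by linarith)).mul_mul_conjTranspose_same R
    rwa [hRH.eq, hsplit] at this
  have hQQ : msqrt (Shat + l • 1) * msqrt (Shat + l • 1) = R * (1 + E) * R := by
    rw [msqrt_mul_self hB, hsplit]
  rw [minvSqrt, minvSqrt, sq, sq, ← CStarRing.norm_self_mul_star, ← CStarRing.norm_self_mul_star,
    star_eq_conjTranspose, star_eq_conjTranspose,
    mul_inv_mul_conjTranspose_of_mul_self_eq hRH hRu (isHermitian_msqrt _) hQQ,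
    inv_mul_mul_conjTranspose_of_mul_self_eq hRH hRu (isHermitian_msqrt _) hQQ]
  constructor
  · calc ‖(1 + E)⁻¹‖ ≤ (1 - ‖E‖)⁻¹ := l2_opNorm_inv_one_add_le (by linarith)
      _ ≤ 2 := by rw [inv_le_comm₀ (by linarith) two_pos]; linarith
  · calc ‖1 + E‖ ≤ ‖(1 : Matrix (Fin d) (Fin d) ℝ)‖ + ‖E‖ := norm_add_le _ _
      _ ≤ 3 / 2 := by linarith [CStarRing.norm_one_le (E := Matrix (Fin d) (Fin d) ℝ)]
end
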